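/- The Diag-verb composition rule preserves hyponymy: if n₁, n₂, v₁, v₂ are positive semidefinite real m×m matrices with n₁ ≤ n₂ and v₁ ≤ v₂ in the Löwner order, then (Σ_{ij} (n₁)_{ij})·diag(v₁) ≤ (Σ_{ij} (n₂)_{ij})·diag(v₂) in the Löwner order. -/

import Mathlib

open Matrix

namespace Matrix

variable {ι R : Type*}

section Ring

variable [Ring R] [PartialOrder R] [StarRing R]

theorem PosSemidef.sum_entries_nonneg [Fintype ι] {A : Matrix ι ι R} (hA : A.PosSemidef) :
    0 ≤ ∑ i, ∑ j, A i j := by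
  simpa [dotProduct, mulVec] using hA.dotProduct_mulVec_nonneg 1

theorem sum_entries_le_of_posSemidef_sub [Fintype ι] [IsOrderedAddMonoid R] {A B : Matrix ι ι R}
    (h : (B - A).PosSemidef) :
    ∑ i, ∑ j, A i j ≤ ∑ i, ∑ j, B i j := by
  simpa [Finset.sum_sub_distrib, sub_nonneg] using h.sum_entries_nonneg

theorem diag_le_of_posSemidef_sub [IsOrderedAddMonoid R] {A B : Matrix ι ι R}
    (h : (B - A).PosSemidef) (i : ι) :
    A i i ≤ B i i :=
  sub_nonneg.mp h.diag_nonneg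

end Ring

theorem posSemidef_smul_diagonal_sub_smul_diagonal [DecidableEq ι] [Ring R] [PartialOrder R]
    [StarRing R] [StarOrderedRing R] [IsOrderedRing R] {s₁ s₂ : R} {d₁ d₂ : ι → R}
    (hs : s₁ ≤ s₂) (hs₂ : 0 ≤ s₂) (hd : d₁ ≤ d₂) (hd₁ : 0 ≤ d₁) :
    (s₂ • diagonal d₂ - s₁ • diagonal d₁).PosSemidef := by
  rw [← diagonal_smul, ← diagonal_smul, diagonal_sub, posSemidef_diagonal_iff]
  intro i
  exact sub_nonneg.mpr (mul_le_mul hs (hd i) (hd₁ i) hs₂)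

end Matrix

theorem stmt_9_general (m : ℕ)
    (n₁ n₂ v₁ v₂ : Matrix (Fin m) (Fin m) ℝ)
    (hn₂ : n₂.PosSemidef)
    (hv₁ : v₁.PosSemidef)
    (hn : (n₂ - n₁).PosSemidef) (hv : (v₂ - v₁).PosSemidef) :
    ((∑ i, ∑ j, n₂ i j) • Matrix.diagonal (fun i => v₂ i i)
      - (∑ i, ∑ j, n₁ i j) • Matrix.diagonal (fun i => v₁ i i)).PosSemidef :=
  posSemidef_smul_diagonal_sub_smul_diagonal (sum_entries_le_of_posSemidef_sub hn)
    hn₂.sum_entries_nonneg (diag_le_of_posSemidef_sub hv) fun _ => hv₁.diag_nonneg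

/-- The Diag-verb rule `Compr(n,v) = (Σᵢⱼ nᵢⱼ) • diag(v)` preserves hyponymy. -/
theorem stmt_9 (m : ℕ)
    (n₁ n₂ v₁ v₂ : Matrix (Fin m) (Fin m) ℝ)
    (hn₁ : n₁.PosSemidef) (hn₂ : n₂.PosSemidef)
    (hv₁ : v₁.PosSemidef) (hv₂ : v₂.PosSemidef)
    (hn : (n₂ - n₁).PosSemidef) (hv : (v₂ - v₁).PosSemidef) :
    ((∑ i, ∑ j, n₂ i j) • Matrix.diagonal (fun i => v₂ i i)
      - (∑ i, ∑ j, n₁ i j) • Matrix.diagonal (fun i => v₁ i i)).PosSemidef :=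
  stmt_9_general m n₁ n₂ v₁ v₂ hn₂ hv₁ hn hv
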